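/- arXiv:2408.14604 — 8 statements merged into one kernel-verified Lean document; each statement's English description precedes it below -/
import Mathlib

section
/- Let n, k, ℓ be positive integers with k ≤ ℓ and 2ℓ ≤ n. Let A and B be n×n real matrices, each of rank at most k, such that P_U(A) = P_U(B) (they agree on all strictly upper-triangular entries). Let M be the ℓ×ℓ top-right submatrix of A given by M_{rc} = A_{r, n−ℓ+c} for 1 ≤ r, c ≤ ℓ, and suppose rank(M) = k. Then A_{ij} = B_{ij} for all indices i, j with 1 < i ≤ n−ℓ and ℓ < j ≤ n. -/
open Matrix Module

lemma myRank_submatrix_le {m n p q : Type*} [Fintype m] [Fintype n] [Fintype p] [Fintype q]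
    [DecidableEq m] [DecidableEq n]
    (X : Matrix m n ℝ) (f : p → m) (g : q → n) :
    (X.submatrix f g).rank ≤ X.rank := by
  have h : X.submatrix f g =
      (Matrix.of fun (r : p) (kk : m) => if kk = f r then (1:ℝ) else 0) * X *
      (Matrix.of fun (jj : n) (c : q) => if jj = g c then (1:ℝ) else 0) := by
    ext r c
    simp [Matrix.mul_apply, ite_mul, mul_ite, Finset.sum_ite_eq', Finset.sum_ite_eq]
  rw [h]
  exact le_trans (Matrix.rank_mul_le_left _ _) (Matrix.rank_mul_le_right _ _)

lemma myCol_span {N q : ℕ} (X : Matrix (Fin N) (Fin N) ℝ) (g : Fin q → Fin N)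
    (hle : X.rank ≤ (X.submatrix id g).rank) (j : Fin N) :
    ∃ x : Fin q → ℝ, ∀ i, X i j = ∑ c, X i (g c) * x c := by
  classical
  set S := X.submatrix id g with hS
  have hsub : LinearMap.range S.mulVecLin ≤ LinearMap.range X.mulVecLin := by
    rintro v ⟨x, rfl⟩
    refine ⟨fun jj => ∑ c, if jj = g c then x c else 0, ?_⟩
    ext i
    simp only [Matrix.mulVecLin_apply, Matrix.mulVec, dotProduct]
    simp_rw [Finset.mul_sum, mul_ite, mul_zero]
    rw [Finset.sum_comm]
    simp [Finset.sum_ite_eq', hS, Matrix.submatrix]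
  have heq : LinearMap.range S.mulVecLin = LinearMap.range X.mulVecLin := by
    apply Submodule.eq_of_le_of_finrank_le hsub hle
  have hcol : X.mulVec (Pi.single j 1) ∈ LinearMap.range S.mulVecLin := by
    rw [heq]; exact ⟨Pi.single j 1, rfl⟩
  obtain ⟨x, hx⟩ := hcol
  refine ⟨x, fun i => ?_⟩
  have h1 : X.mulVec (Pi.single j 1) i = X i j := by
    simp [Matrix.mulVec, dotProduct, Pi.single_apply, mul_ite]
  have h2 : S.mulVec x i = X i j := by rw [← h1]; exact congrFun hx i
  rw [← h2]
  simp [Matrix.mulVec, dotProduct, hS]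

lemma myKer_vanish {N p q : ℕ} {k : ℕ} (X : Matrix (Fin N) (Fin N) ℝ)
    (hX : X.rank ≤ k) (f : Fin p → Fin N) (g : Fin q → Fin N)
    (hMr : (X.submatrix f g).rank = k) (i : Fin N)
    (z : Fin q → ℝ) (hz : (X.submatrix f g).mulVec z = 0) :
    ∑ c, X i (g c) * z c = 0 := by
  classical
  set f' : Option (Fin p) → Fin N := fun o => o.elim i f with hf'
  set T := X.submatrix f' g with hT
  set Mm := X.submatrix f g with hMm
  have hTk : T.rank ≤ k := le_trans (myRank_submatrix_le X f' g) hX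
  have hMT : Mm.rank ≤ T.rank := by
    have h : Mm = T.submatrix Option.some id := rfl
    rw [h]; exact myRank_submatrix_le T Option.some id
  have hTrank : T.rank = k := le_antisymm hTk (hMr ▸ hMT)
  have hkerle : LinearMap.ker T.mulVecLin ≤ LinearMap.ker Mm.mulVecLin := by
    intro v hv
    rw [LinearMap.mem_ker] at hv ⊢
    ext r
    have h := congrFun hv (some r)
    simpa [Matrix.mulVecLin_apply, Matrix.mulVec, dotProduct, hT, hMm, hf'] using h
  have hfr : Module.finrank ℝ (LinearMap.ker Mm.mulVecLin) ≤
      Module.finrank ℝ (LinearMap.ker T.mulVecLin) := by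
    have h1 := LinearMap.finrank_range_add_finrank_ker Mm.mulVecLin
    have h2 := LinearMap.finrank_range_add_finrank_ker T.mulVecLin
    have e1 : Mm.rank + Module.finrank ℝ (LinearMap.ker Mm.mulVecLin) = q := by
      rw [Matrix.rank]; simpa using h1
    have e2 : T.rank + Module.finrank ℝ (LinearMap.ker T.mulVecLin) = q := by
      rw [Matrix.rank]; simpa using h2
    omega
  have hker : LinearMap.ker T.mulVecLin = LinearMap.ker Mm.mulVecLin :=
    Submodule.eq_of_le_of_finrank_le hkerle hfr
  have hzT : z ∈ LinearMap.ker T.mulVecLin := by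
    rw [hker, LinearMap.mem_ker]
    simpa [Matrix.mulVecLin_apply] using hz
  have h := congrFun (LinearMap.mem_ker.mp hzT) none
  simpa [Matrix.mulVecLin_apply, Matrix.mulVec, dotProduct, hT, hf'] using h

/-- Proposition 1 (identifiability): two rank-≤k matrices agreeing on the strict
upper triangle, whose ℓ×ℓ top-right corner has rank k, agree on all entries with
(1-based) row index in (1, n-ℓ] and column index in (ℓ, n]. -/
theorem identifiability (n k ℓ : ℕ) (hn : 0 < n) (hk : 0 < k) (hℓ : 0 < ℓ)
    (hkℓ : k ≤ ℓ) (hℓn : 2 * ℓ ≤ n)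
    (A B : Matrix (Fin n) (Fin n) ℝ)
    (hA : A.rank ≤ k) (hB : B.rank ≤ k)
    (hUpper : ∀ i j : Fin n, i < j → A i j = B i j)
    (M : Matrix (Fin ℓ) (Fin ℓ) ℝ)
    (hM : ∀ r c : Fin ℓ,
      M r c = A ⟨r.val, lt_of_lt_of_le r.isLt (by omega)⟩
                ⟨n - ℓ + c.val, by have := c.isLt; omega⟩)
    (hrank : M.rank = k) :
    ∀ i j : Fin n, 0 < i.val → i.val + 1 ≤ n - ℓ → ℓ ≤ j.val → A i j = B i j := by
  intro i j hi1 hi2 hj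
  have hℓn' : ℓ ≤ n - ℓ := by omega
  set f : Fin ℓ → Fin n := fun r => ⟨r.val, by have := r.isLt; omega⟩ with hf
  set g : Fin ℓ → Fin n := fun c => ⟨n - ℓ + c.val, by have := c.isLt; omega⟩ with hg
  have hMA : M = A.submatrix f g := by
    ext r c; exact hM r c
  have hsh : ∀ (r c : Fin ℓ), A (f r) (g c) = B (f r) (g c) := by
    intro r c
    apply hUpper
    show (r : ℕ) < n - ℓ + c.val
    have := r.isLt
    omega
  have hMB : A.submatrix f g = B.submatrix f g := by
    ext r c; exact hsh r c
  have hrA : (A.submatrix f g).rank = k := by rw [← hMA]; exact hrank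
  have hrB : (B.submatrix f g).rank = k := by rw [← hMB]; exact hrA
  have hleA : A.rank ≤ (A.submatrix id g).rank := by
    calc A.rank ≤ k := hA
    _ = (A.submatrix f g).rank := hrA.symm
    _ ≤ (A.submatrix id g).rank := by
        have h : A.submatrix f g = (A.submatrix id g).submatrix f id := rfl
        rw [h]; exact myRank_submatrix_le _ f id
  have hleB : B.rank ≤ (B.submatrix id g).rank := by
    calc B.rank ≤ k := hB
    _ = (B.submatrix f g).rank := hrB.symm
    _ ≤ (B.submatrix id g).rank := by
        have h : B.submatrix f g = (B.submatrix id g).submatrix f id := rfl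
        rw [h]; exact myRank_submatrix_le _ f id
  obtain ⟨xA, hxA⟩ := myCol_span A g hleA j
  obtain ⟨xB, hxB⟩ := myCol_span B g hleB j
  have hz : (A.submatrix f g).mulVec (xA - xB) = 0 := by
    ext r
    have hupr : A (f r) j = B (f r) j := by
      apply hUpper
      show (r : ℕ) < j.val
      have := r.isLt
      omega
    have e : ∑ c, A (f r) (g c) * (xA c - xB c) = 0 := by
      calc ∑ c, A (f r) (g c) * (xA c - xB c)
          = (∑ c, A (f r) (g c) * xA c) - ∑ c, A (f r) (g c) * xB c := by
            rw [← Finset.sum_sub_distrib]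
            exact Finset.sum_congr rfl fun c _ => by ring
        _ = (∑ c, A (f r) (g c) * xA c) - ∑ c, B (f r) (g c) * xB c := by
            congr 1
            exact Finset.sum_congr rfl fun c _ => by rw [hsh]
        _ = A (f r) j - B (f r) j := by rw [← hxA (f r), ← hxB (f r)]
        _ = 0 := by rw [hupr]; ring
    simpa [Matrix.mulVec, dotProduct, Matrix.submatrix] using e
  have hv := myKer_vanish A hA f g hrA i (xA - xB) hz
  have hv' : ∑ c, A i (g c) * (xA c - xB c) = 0 := by simpa using hv
  have hshi : ∀ c : Fin ℓ, A i (g c) = B i (g c) := by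
    intro c
    apply hUpper
    show (i : ℕ) < n - ℓ + c.val
    omega
  calc A i j = ∑ c, A i (g c) * xA c := hxA i
    _ = ∑ c, A i (g c) * xB c := by
        have h0 : (∑ c, A i (g c) * xA c) - ∑ c, A i (g c) * xB c = 0 := by
          rw [← Finset.sum_sub_distrib, ← hv']
          exact Finset.sum_congr rfl fun c _ => by ring
        linarith
    _ = ∑ c, B i (g c) * xB c := Finset.sum_congr rfl fun c _ => by rw [hshi c]
    _ = B i j := (hxB i).symm
end

section
/- Let M be an a×b real matrix, u ∈ ℝ^a, v ∈ ℝ^b (viewed as a column appended to M and a row appended below M, respectively), and let x, x′ ∈ ℝ. Form the two bordered (a+1)×(b+1) matrices C = [[M, u], [v, x]] and C′ = [[M, u], [v, x′]]. If rank(C) ≤ rank(M) and rank(C′) ≤ rank(M), then x = x′. -/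
/-! If `rank [[A, B], [C, D]] ≤ rank A`, then also `rank [A, B] = rank A` and
`rank [[A, B], [C, D]] = rank [A, B]`. Equality of ranks turns the inclusions of column
(resp. row) spaces into equalities, so `B = A X` and `[C, D] = Y [A, B]`. Hence
`D = Y A X = C X`, which does not depend on `D`. -/

open Matrix

/-- The bordered (a+1)×(b+1) matrix `[[M, u], [v, x]]`: top-left block `M`,
last column (above the corner) `u`, last row (left of the corner) `v`,
bottom-right corner `x`. -/
def bordered {a b : ℕ} (M : Matrix (Fin a) (Fin b) ℝ) (u : Fin a → ℝ)
    (v : Fin b → ℝ) (x : ℝ) : Matrix (Fin (a + 1)) (Fin (b + 1)) ℝ :=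
  Matrix.of fun i j =>
    if hi : i.val < a then
      if hj : j.val < b then M ⟨i.val, hi⟩ ⟨j.val, hj⟩ else u ⟨i.val, hi⟩
    else
      if hj : j.val < b then v ⟨j.val, hj⟩ else x

namespace Matrix

variable {R : Type*} {m₁ m₂ n₁ n₂ : Type*} [Fintype n₁] [Fintype n₂]
  {A : Matrix m₁ n₁ R} {B : Matrix m₁ n₂ R} {C : Matrix m₂ n₁ R} {D D' : Matrix m₂ n₂ R}

section CommSemiring

variable [CommSemiring R]

theorem exists_eq_mul_of_range_mulVecLin_le
    (h : LinearMap.range B.mulVecLin ≤ LinearMap.range A.mulVecLin) :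
    ∃ X : Matrix n₁ n₂ R, B = A * X := by
  classical
  have hcol : ∀ j, ∃ w, A *ᵥ w = B.col j := fun j =>
    h ⟨Pi.single j 1, B.mulVec_single_one j⟩
  choose w hw using hcol
  refine ⟨of fun i j => w j i, ?_⟩
  ext i j
  rw [← col_apply B j i, ← hw j]
  simp [mul_apply, mulVec, dotProduct]

variable [StrongRankCondition R]

theorem rank_le_rank_fromCols : A.rank ≤ (fromCols A B).rank :=
  rank_submatrix_le (fromCols A B) id Sum.inl

theorem rank_fromCols_le_rank_fromBlocks : (fromCols A B).rank ≤ (fromBlocks A B C D).rank :=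
  rank_submatrix_le (fromBlocks A B C D) Sum.inl id

end CommSemiring

variable [Field R]

theorem exists_eq_mul_of_rank_fromCols_le (h : (fromCols A B).rank ≤ A.rank) :
    ∃ X : Matrix n₁ n₂ R, B = A * X := by
  have hA : LinearMap.range A.mulVecLin ≤ LinearMap.range (fromCols A B).mulVecLin := by
    rintro _ ⟨v, rfl⟩
    exact ⟨Sum.elim v 0, by simp⟩
  have hB : LinearMap.range B.mulVecLin ≤ LinearMap.range (fromCols A B).mulVecLin := by
    rintro _ ⟨v, rfl⟩
    exact ⟨Sum.elim 0 v, by simp⟩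
  apply exists_eq_mul_of_range_mulVecLin_le
  rwa [Submodule.eq_of_le_of_finrank_le hA h]

variable [Fintype m₁] [Fintype m₂]

theorem exists_eq_mul_of_rank_fromRows_le (h : (fromRows A C).rank ≤ A.rank) :
    ∃ Y : Matrix m₂ m₁ R, C = Y * A := by
  rw [← rank_transpose, ← rank_transpose A, transpose_fromRows] at h
  obtain ⟨X, hX⟩ := exists_eq_mul_of_rank_fromCols_le h
  exact ⟨Xᵀ, by rw [← transpose_transpose C, hX, transpose_mul, transpose_transpose]⟩

theorem eq_mul_of_rank_fromBlocks_le (h : (fromBlocks A B C D).rank ≤ A.rank)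
    {X : Matrix n₁ n₂ R} (hX : B = A * X) : D = C * X := by
  rw [← fromRows_fromCols_eq_fromBlocks] at h
  obtain ⟨Y, hY⟩ := exists_eq_mul_of_rank_fromRows_le (h.trans rank_le_rank_fromCols)
  rw [mul_fromCols] at hY
  obtain ⟨rfl, rfl⟩ := fromCols_inj hY
  rw [hX, Matrix.mul_assoc]

theorem eq_of_rank_fromBlocks_le (h : (fromBlocks A B C D).rank ≤ A.rank)
    (h' : (fromBlocks A B C D').rank ≤ A.rank) : D = D' := by
  obtain ⟨X, hX⟩ := exists_eq_mul_of_rank_fromCols_le (rank_fromCols_le_rank_fromBlocks.trans h)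
  rw [eq_mul_of_rank_fromBlocks_le h hX, eq_mul_of_rank_fromBlocks_le h' hX]

end Matrix

theorem bordered_eq_reindex_fromBlocks {a b : ℕ} (M : Matrix (Fin a) (Fin b) ℝ)
    (u : Fin a → ℝ) (v : Fin b → ℝ) (x : ℝ) :
    bordered M u v x = reindex finSumFinEquiv finSumFinEquiv
      (fromBlocks M (replicateCol (Fin 1) u) (replicateRow (Fin 1) v) (of fun _ _ => x)) := by
  ext i j
  induction i using Fin.lastCases <;> induction j using Fin.lastCases <;>
    simp [bordered, finSumFinEquiv_symm_apply_castSucc]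

/-- Uniqueness of the corner entry: if two bordered matrices built from the same
`M`, `u`, `v` both have rank not exceeding that of `M`, their corner entries
coincide. -/
theorem bordered_corner_unique {a b : ℕ} (M : Matrix (Fin a) (Fin b) ℝ)
    (u : Fin a → ℝ) (v : Fin b → ℝ) (x x' : ℝ)
    (h : (bordered M u v x).rank ≤ M.rank)
    (h' : (bordered M u v x').rank ≤ M.rank) :
    x = x' := by
  rw [bordered_eq_reindex_fromBlocks, rank_reindex] at h h'
  simpa using congrFun₂ (eq_of_rank_fromBlocks_le h h') 0 0
end

section
/- Let M be an a×b real matrix and let G be a b×a real matrix satisfying M G M = M (i.e., G is a generalized inverse of M). Let u ∈ ℝ^a, v ∈ ℝ^b, x ∈ ℝ, and suppose the bordered (a+1)×(b+1) matrix [[M, u], [v, x]] has rank at most rank(M). Then x = v G u, that is, x = Σ_{c=1}^{b} Σ_{r=1}^{a} v_c · G_{cr} · u_r. -/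
open Matrix

private lemma finSum_symm {a : ℕ} (i : Fin (a + 1)) :
    finSumFinEquiv.symm i = if h : (i : ℕ) < a then (Sum.inl ⟨i, h⟩ : Fin a ⊕ Fin 1)
      else Sum.inr 0 := by
  rw [Equiv.symm_apply_eq]
  by_cases h : (i : ℕ) < a
  · rw [dif_pos h, finSumFinEquiv_apply_left]
    exact Fin.ext (by simp)
  · rw [dif_neg h, finSumFinEquiv_apply_right]
    refine Fin.ext ?_
    have := i.isLt
    simp only [Fin.coe_natAdd]
    simp
    omega

private lemma rank_submatrix_le' {R : Type*} [Field R] {k m l n : Type*} [Fintype n] [Fintype l]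
    (f : k → m) (e : l ≃ n) (A : Matrix m n R) : (A.submatrix f e).rank ≤ A.rank := by
  rw [Matrix.rank, Matrix.rank, Matrix.mulVecLin_submatrix, LinearMap.range_comp,
    LinearMap.range_comp,
    show LinearMap.funLeft R R e.symm
      = (LinearEquiv.funCongrLeft R R e.symm : (l → R) →ₗ[R] (n → R)) from rfl,
    LinearEquiv.range, Submodule.map_top]
  exact Submodule.finrank_map_le _ _

private lemma rank_submatrix_eq' {R : Type*} [Field R] {k m l n : Type*} [Fintype n] [Fintype l]
    (e₁ : k ≃ m) (e₂ : l ≃ n) (A : Matrix m n R) : (A.submatrix e₁ e₂).rank = A.rank := by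
  rw [Matrix.rank, Matrix.rank, Matrix.mulVecLin_submatrix, LinearMap.range_comp,
    LinearMap.range_comp,
    show LinearMap.funLeft R R e₂.symm
      = (LinearEquiv.funCongrLeft R R e₂.symm : (l → R) →ₗ[R] (n → R)) from rfl,
    LinearEquiv.range, Submodule.map_top,
    show LinearMap.funLeft R R e₁
      = (LinearEquiv.funCongrLeft R R e₁ : (m → R) →ₗ[R] (k → R)) from rfl]
  exact LinearEquiv.finrank_map_eq _ _

private lemma bordered_eq {a b : ℕ} (M : Matrix (Fin a) (Fin b) ℝ) (u : Fin a → ℝ)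
    (v : Fin b → ℝ) (x : ℝ) :
    bordered M u v x = (Matrix.fromBlocks M (Matrix.of fun i (_ : Fin 1) => u i)
      (Matrix.of fun (_ : Fin 1) j => v j) (Matrix.of fun (_ _ : Fin 1) => x)).submatrix
      finSumFinEquiv.symm finSumFinEquiv.symm := by
  ext i j
  simp only [bordered, Matrix.of_apply, Matrix.submatrix_apply, finSum_symm]
  by_cases hi : (i : ℕ) < a <;> by_cases hj : (j : ℕ) < b <;> simp [hi, hj]

/-- If `[M | U]`-style bordering does not raise the rank, the extra column block
is in the column space of `M`. -/
private lemma exists_right_factor {a b : ℕ} (M : Matrix (Fin a) (Fin b) ℝ)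
    (U : Matrix (Fin a) (Fin 1) ℝ) (V : Matrix (Fin 1) (Fin b) ℝ) (X : Matrix (Fin 1) (Fin 1) ℝ)
    (h : (Matrix.fromBlocks M U V X).rank ≤ M.rank) :
    ∃ Z : Matrix (Fin b) (Fin 1) ℝ, M * Z = U := by
  set N : Matrix (Fin a) (Fin b ⊕ Fin 1) ℝ :=
    (Matrix.fromBlocks M U V X).submatrix (Sum.inl : Fin a → Fin a ⊕ Fin 1) (Equiv.refl _) with hN
  have hNle : N.rank ≤ M.rank := (rank_submatrix_le' _ _ _).trans h
  have hsub : LinearMap.range M.mulVecLin ≤ LinearMap.range N.mulVecLin := by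
    rintro w ⟨g, rfl⟩
    refine ⟨Sum.elim g 0, ?_⟩
    ext i
    simp [hN, Matrix.mulVec, dotProduct, Fintype.sum_sum_type]
  have heq : LinearMap.range N.mulVecLin = LinearMap.range M.mulVecLin :=
    (Submodule.eq_of_le_of_finrank_le hsub hNle).symm
  have hu : (fun i => U i 0) ∈ LinearMap.range N.mulVecLin := by
    refine ⟨Sum.elim 0 (fun _ => 1), ?_⟩
    ext i
    simp [hN, Matrix.mulVec, dotProduct, Fintype.sum_sum_type]
  rw [heq] at hu
  obtain ⟨z, hz⟩ := hu
  refine ⟨Matrix.of fun j (_ : Fin 1) => z j, ?_⟩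
  ext i j
  have := congrFun hz i
  fin_cases j
  simpa [Matrix.mul_apply, Matrix.mulVec, dotProduct] using this

/-- a block-diagonal matrix with nonzero 1×1 lower block has rank `> rank M`. -/
private lemma corner_block_zero {a b : ℕ} (M : Matrix (Fin a) (Fin b) ℝ)
    (W : Matrix (Fin 1) (Fin 1) ℝ)
    (h : (Matrix.fromBlocks M 0 0 W).rank ≤ M.rank) : W = 0 := by
  by_contra hW
  have hW00 : W 0 0 ≠ 0 := by
    intro h0
    apply hW
    ext i j
    fin_cases i; fin_cases j; simpa using h0
  set D : Matrix (Fin a ⊕ Fin 1) (Fin b ⊕ Fin 1) ℝ := Matrix.fromBlocks M 0 0 W with hD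
  set π : ((Fin a ⊕ Fin 1) → ℝ) →ₗ[ℝ] (Fin a → ℝ) :=
    LinearMap.funLeft ℝ ℝ (Sum.inl : Fin a → Fin a ⊕ Fin 1) with hπ
  set S := LinearMap.range D.mulVecLin with hS
  have hmap : Submodule.map π S = LinearMap.range M.mulVecLin := by
    apply le_antisymm
    · rintro w ⟨_, ⟨g, rfl⟩, rfl⟩
      refine ⟨fun j => g (Sum.inl j), ?_⟩
      ext i
      simp [hD, hπ, Matrix.mulVec, dotProduct, Fintype.sum_sum_type, LinearMap.funLeft]
    · rintro w ⟨g, rfl⟩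
      refine ⟨D.mulVecLin (Sum.elim g 0), ⟨Sum.elim g 0, rfl⟩, ?_⟩
      ext i
      simp [hD, hπ, Matrix.mulVec, dotProduct, Fintype.sum_sum_type, LinearMap.funLeft]
  have hrn := LinearMap.finrank_range_add_finrank_ker (π.domRestrict S)
  have hrange : LinearMap.range (π.domRestrict S) = LinearMap.range M.mulVecLin := by
    rw [LinearMap.range_domRestrict, hmap]
  -- the kernel is nontrivial
  have hker : LinearMap.ker (π.domRestrict S) ≠ ⊥ := by
    have hmem : (D *ᵥ Sum.elim 0 (fun _ => 1)) ∈ S := ⟨Sum.elim 0 (fun _ => 1), rfl⟩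
    intro hbot
    have hξ : (⟨D *ᵥ Sum.elim 0 (fun _ => 1), hmem⟩ : S) ∈ LinearMap.ker (π.domRestrict S) := by
      simp only [LinearMap.mem_ker, LinearMap.domRestrict_apply]
      ext i
      simp [hD, hπ, Matrix.mulVec, dotProduct, Fintype.sum_sum_type, LinearMap.funLeft]
    rw [hbot, Submodule.mem_bot] at hξ
    have := congrArg (fun f : (Fin a ⊕ Fin 1) → ℝ => f (Sum.inr 0)) (congrArg Subtype.val hξ)
    simp [hD, Matrix.mulVec, dotProduct, Fintype.sum_sum_type] at this
    exact hW00 this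
  have hkerpos : 1 ≤ Module.finrank ℝ (LinearMap.ker (π.domRestrict S)) := by
    rcases Nat.eq_zero_or_pos (Module.finrank ℝ (LinearMap.ker (π.domRestrict S))) with h0 | h1
    · exact absurd (Submodule.finrank_eq_zero.mp h0) hker
    · exact h1
  have : M.rank + 1 ≤ D.rank := by
    have h1 : Module.finrank ℝ (LinearMap.range (π.domRestrict S)) = M.rank := by
      rw [hrange]; rfl
    have h2 : Module.finrank ℝ S = D.rank := rfl
    omega
  omega

/-- Rank identity (after Tian (2004), eq. 1.5): if the bordered matrix
`[[M, u], [v, x]]` has rank at most `rank M` and `G` is a generalized inverse of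
`M`, then `x = v G u`. -/
theorem bordered_corner_eq_vGu {a b : ℕ} (M : Matrix (Fin a) (Fin b) ℝ)
    (G : Matrix (Fin b) (Fin a) ℝ) (hG : M * G * M = M)
    (u : Fin a → ℝ) (v : Fin b → ℝ) (x : ℝ)
    (h : (bordered M u v x).rank ≤ M.rank) :
    x = ∑ c : Fin b, ∑ r : Fin a, v c * G c r * u r := by
  set U : Matrix (Fin a) (Fin 1) ℝ := Matrix.of fun i _ => u i with hU
  set V : Matrix (Fin 1) (Fin b) ℝ := Matrix.of fun _ j => v j with hV
  set X : Matrix (Fin 1) (Fin 1) ℝ := Matrix.of fun _ _ => x with hX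
  set B : Matrix (Fin a ⊕ Fin 1) (Fin b ⊕ Fin 1) ℝ := Matrix.fromBlocks M U V X with hB
  have hBrank : B.rank ≤ M.rank := by
    have := rank_submatrix_eq' (finSumFinEquiv.symm) (finSumFinEquiv.symm) B
    rw [← bordered_eq] at this
    omega
  -- extract U = M * Z
  obtain ⟨Z, hZ⟩ := exists_right_factor M U V X hBrank
  -- extract V = Y * M via transpose
  obtain ⟨Y', hY'⟩ : ∃ Y' : Matrix (Fin a) (Fin 1) ℝ, Mᵀ * Y' = Vᵀ := by
    apply exists_right_factor Mᵀ Vᵀ Uᵀ Xᵀ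
    rw [← Matrix.fromBlocks_transpose, Matrix.rank_transpose, Matrix.rank_transpose]
    exact hBrank
  set Y : Matrix (Fin 1) (Fin a) ℝ := Y'ᵀ with hYdef
  have hY : Y * M = V := by
    rw [hYdef, ← Matrix.transpose_transpose M, ← Matrix.transpose_mul, hY',
      Matrix.transpose_transpose]
  -- row/column reduce B
  set E : Matrix (Fin a ⊕ Fin 1) (Fin a ⊕ Fin 1) ℝ := Matrix.fromBlocks 1 0 (-Y) 1 with hE
  set F : Matrix (Fin b ⊕ Fin 1) (Fin b ⊕ Fin 1) ℝ := Matrix.fromBlocks 1 (-Z) 0 1 with hF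
  have hEdet : IsUnit E.det := by
    rw [hE, Matrix.det_fromBlocks_zero₁₂, Matrix.det_one, Matrix.det_one, one_mul]
    exact isUnit_one
  have hFdet : IsUnit F.det := by
    rw [hF, Matrix.det_fromBlocks_zero₂₁, Matrix.det_one, Matrix.det_one, one_mul]
    exact isUnit_one
  have hEBF : E * B * F = Matrix.fromBlocks M 0 0 (X - Y * M * Z) := by
    rw [hE, hF, hB, Matrix.fromBlocks_multiply, Matrix.fromBlocks_multiply]
    simp [← hZ, ← hY, Matrix.neg_mul, Matrix.mul_neg, Matrix.mul_assoc, sub_eq_add_neg,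
      add_comm]
  have hrankEBF : (E * B * F).rank = B.rank := by
    rw [Matrix.rank_mul_eq_left_of_isUnit_det _ _ hFdet,
      Matrix.rank_mul_eq_right_of_isUnit_det _ _ hEdet]
  have hzero : X - Y * M * Z = 0 := by
    apply corner_block_zero M
    rw [← hEBF, hrankEBF]
    exact hBrank
  have hXval : X = Y * M * Z := by
    have := sub_eq_zero.mp hzero
    exact this
  -- now compute
  have hVGU : V * G * U = X := by
    have h1 : V * G * U = Y * (M * (G * (M * Z))) := by
      rw [← hY, ← hZ] at *
      simp only [Matrix.mul_assoc]
    have h2 : Y * (M * (G * (M * Z))) = Y * (M * Z) := by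
      rw [← Matrix.mul_assoc G M Z, ← Matrix.mul_assoc M (G * M) Z, ← Matrix.mul_assoc M G M, hG]
    rw [h1, h2, hXval, Matrix.mul_assoc]
  have := congrFun (congrFun hVGU 0) 0
  rw [hX] at this
  simp only [Matrix.of_apply] at this
  rw [← this]
  rw [Matrix.mul_apply]
  rw [Finset.sum_comm]
  apply Finset.sum_congr rfl
  intro r _
  rw [Matrix.mul_apply]
  rw [Finset.sum_mul]
  apply Finset.sum_congr rfl
  intro c _
  simp [hU, hV]
end

section
/- Let n, k, ℓ be positive integers with k ≤ ℓ and 2ℓ ≤ n. Let C be an n×n real matrix with rank(C) ≤ k. Let M be the ℓ×ℓ top-right submatrix M_{rc} = C_{r, n−ℓ+c} (1 ≤ r, c ≤ ℓ), suppose rank(M) = k, and let G be any ℓ×ℓ real matrix with M G M = M. Then for all indices i, j with 1 ≤ i ≤ n−ℓ and ℓ < j ≤ n, C_{ij} = Σ_{c=1}^{ℓ} Σ_{r=1}^{ℓ} C_{i, n−ℓ+c} · G_{cr} · C_{r, j}. In particular, every such entry of C is recovered, via the Nyström formula, from entries of C lying in its strict upper triangle. -/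
/-!
Nyström (skeleton, CUR) decomposition. If the rows indexed by `r` and the columns indexed by `c`
of `C` meet in a block `M` of full rank `rank C`, then the selected rows span the row space of `C`
and the selected columns span its column space, so `C = X M Y` with `C.submatrix id c = X M` and
`C.submatrix r id = M Y`. Any generalized inverse `G` of `M` then gives
`C.submatrix id c * G * C.submatrix r id = X M G M Y = C`.
-/

open Matrix Submodule

namespace Matrix

variable {K m n m₀ n₀ : Type*} [Field K] [Fintype m] [Fintype n] [Fintype m₀] [Fintype n₀]

theorem exists_eq_submatrix_cols_mul (A : Matrix m n K) (c : n₀ → n)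
    (h : A.rank ≤ (A.submatrix id c).rank) : ∃ Y : Matrix n₀ n K, A = A.submatrix id c * Y := by
  have hle : span K (Set.range (A.submatrix id c).col) ≤ span K (Set.range A.col) :=
    span_mono <| by rintro _ ⟨j, rfl⟩; exact ⟨c j, rfl⟩
  have hspan : span K (Set.range (A.submatrix id c).col) = span K (Set.range A.col) :=
    eq_of_le_of_finrank_le hle <| by rwa [← rank_eq_finrank_span_cols, ← rank_eq_finrank_span_cols]
  have hcol (j : n) : ∃ y : n₀ → K, ∑ j₀, y j₀ • (A.submatrix id c).col j₀ = A.col j :=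
    (mem_span_range_iff_exists_fun K).mp (hspan ▸ subset_span ⟨j, rfl⟩)
  choose Y hY using hcol
  refine ⟨(of Y)ᵀ, ext fun i j => ?_⟩
  simpa [mul_apply, Finset.sum_apply, mul_comm] using (congrFun (hY j) i).symm

theorem exists_eq_mul_submatrix_rows (A : Matrix m n K) (r : m₀ → m)
    (h : A.rank ≤ (A.submatrix r id).rank) : ∃ X : Matrix m m₀ K, A = X * A.submatrix r id := by
  obtain ⟨Y, hY⟩ := exists_eq_submatrix_cols_mul Aᵀ r <| by
    rwa [rank_transpose, ← transpose_submatrix, rank_transpose]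
  refine ⟨Yᵀ, ?_⟩
  calc A = (Aᵀ.submatrix id r * Y)ᵀ := by rw [← hY, transpose_transpose]
    _ = Yᵀ * A.submatrix r id := by rw [transpose_mul]; rfl

theorem eq_submatrix_mul_ginv_mul_submatrix (C : Matrix m n K) (r : m₀ → m) (c : n₀ → n)
    (h : C.rank ≤ (C.submatrix r c).rank) (G : Matrix n₀ m₀ K)
    (hG : C.submatrix r c * G * C.submatrix r c = C.submatrix r c) :
    C = C.submatrix id c * G * C.submatrix r id := by
  set M := C.submatrix r c
  set A := C.submatrix r id
  have hMA : M.rank ≤ A.rank := rank_submatrix_le A id c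
  have hAC : A.rank ≤ C.rank := rank_submatrix_le C r id
  obtain ⟨X, hX⟩ := exists_eq_mul_submatrix_rows C r (h.trans hMA)
  obtain ⟨Y, hY⟩ : ∃ Y, A = M * Y := exists_eq_submatrix_cols_mul A c (hAC.trans h)
  have hB : C.submatrix id c = X * M := by rw [hX]; rfl
  calc C = X * A := hX
    _ = X * M * Y := by rw [hY, Matrix.mul_assoc]
    _ = X * (M * G * M) * Y := by rw [hG]
    _ = C.submatrix id c * G * A := by rw [hB, hY]; simp only [Matrix.mul_assoc]

end Matrix

/-- Constructive (Nyström) form of Proposition 1: a rank-≤k matrix `C` whose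
ℓ×ℓ top-right corner `M` has rank `k` satisfies, for every entry outside the
first ℓ columns and the last ℓ rows (1-based: 1 ≤ i ≤ n-ℓ and ℓ < j ≤ n),
`C i j = Σ_c Σ_r C_{i, n-ℓ+c} G_{cr} C_{r, j}` for any generalized inverse `G`
of `M`.  All entries on the right-hand side lie in the strict upper triangle. -/
theorem nystrom_reconstruction (n k ℓ : ℕ) (hℓn : 2 * ℓ ≤ n)
    (C : Matrix (Fin n) (Fin n) ℝ) (hC : C.rank ≤ k)
    (M : Matrix (Fin ℓ) (Fin ℓ) ℝ)
    (hM : ∀ r c : Fin ℓ,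
      M r c = C ⟨r.val, lt_of_lt_of_le r.isLt (by omega)⟩
                ⟨n - ℓ + c.val, by have := c.isLt; omega⟩)
    (hrank : M.rank = k)
    (G : Matrix (Fin ℓ) (Fin ℓ) ℝ) (hG : M * G * M = M) :
    ∀ i j : Fin n, i.val < n - ℓ → ℓ ≤ j.val →
      C i j = ∑ c : Fin ℓ, ∑ r : Fin ℓ,
        C i ⟨n - ℓ + c.val, by have := c.isLt; omega⟩ * G c r *
          C ⟨r.val, lt_of_lt_of_le r.isLt (by omega)⟩ j := by
  intro i j _ _
  have hMsub : M = C.submatrix (fun r : Fin ℓ => ⟨r.val, by omega⟩)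
      (fun c : Fin ℓ => ⟨n - ℓ + c.val, by omega⟩) := ext hM
  rw [hMsub] at hrank hG
  have hC_eq := eq_submatrix_mul_ginv_mul_submatrix C _ _ (hC.trans hrank.ge) G hG
  conv_lhs => rw [hC_eq]
  simp only [mul_apply, submatrix_apply, id, Finset.sum_mul]
  exact Finset.sum_comm
end

section
/- Fix an integer k ≥ 2, let ℓ be an integer with ℓ ≥ 2·k·log k, and let n ≥ 2ℓ. Let (z, y) be drawn from the product of 2n independent uniform distributions on {1,…,k}, giving i.i.d. community memberships z(1),…,z(n) and y(1),…,y(n). Let B be a fixed k×k invertible real matrix and θ^out, θ^in : {1,…,n} → ℝ fixed strictly positive degree parameters, and let M_ℓ be the random ℓ×ℓ matrix with entries (M_ℓ)_{ij} = θ^out_i · B_{z(i), y(n−ℓ+j)} · θ^in_{n−ℓ+j} for 1 ≤ i, j ≤ ℓ. Then P(rank(M_ℓ) = k) ≥ 1 − 2/k. -/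
open MeasureTheory
open scoped ENNReal

lemma aux_submatrix_eq {m n m' n' : Type*} [Fintype m] [Fintype n] [Fintype m'] [Fintype n']
    [DecidableEq m] [DecidableEq n]
    (A : Matrix m n ℝ) (f : m' → m) (g : n' → n) :
    A.submatrix f g =
      (Matrix.of fun i r => if r = f i then (1:ℝ) else 0) * A *
        (Matrix.of fun r j => if r = g j then (1:ℝ) else 0) := by
  ext i j
  simp [Matrix.mul_apply, ite_mul, mul_ite, Finset.sum_ite_eq]

lemma aux_rank_submatrix_le {m n m' n' : Type*} [Fintype m] [Fintype n] [Fintype m'] [Fintype n']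
    [DecidableEq m] [DecidableEq n]
    (A : Matrix m n ℝ) (f : m' → m) (g : n' → n) :
    (A.submatrix f g).rank ≤ A.rank := by
  rw [aux_submatrix_eq]
  exact le_trans (Matrix.rank_mul_le_left _ _) (Matrix.rank_mul_le_right _ _)

lemma aux_rank_corner {k ℓ : ℕ} (B : Matrix (Fin k) (Fin k) ℝ) (hB : IsUnit B)
    (f g : Fin ℓ → Fin k) (hf : Function.Surjective f) (hg : Function.Surjective g)
    (a b : Fin ℓ → ℝ) (ha : ∀ i, a i ≠ 0) (hb : ∀ j, b j ≠ 0) :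
    (Matrix.of fun i j => a i * B (f i) (g j) * b j).rank = k := by
  have hM : (Matrix.of fun i j => a i * B (f i) (g j) * b j)
      = Matrix.diagonal a * B.submatrix f g * Matrix.diagonal b := by
    ext i j
    simp [Matrix.mul_diagonal, Matrix.diagonal_mul]
  have hda : IsUnit (Matrix.diagonal a).det := by
    rw [Matrix.det_diagonal, isUnit_iff_ne_zero]
    exact Finset.prod_ne_zero_iff.2 fun i _ => ha i
  have hdb : IsUnit (Matrix.diagonal b).det := by
    rw [Matrix.det_diagonal, isUnit_iff_ne_zero]
    exact Finset.prod_ne_zero_iff.2 fun i _ => hb i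
  rw [hM, Matrix.rank_mul_eq_left_of_isUnit_det _ _ hdb,
    Matrix.rank_mul_eq_right_of_isUnit_det _ _ hda]
  have hBr : B.rank = k := by rw [Matrix.rank_of_isUnit B hB, Fintype.card_fin]
  refine le_antisymm (le_trans (aux_rank_submatrix_le B f g) hBr.le) ?_
  have hBs : B = (B.submatrix f g).submatrix (Function.surjInv hf) (Function.surjInv hg) := by
    ext i j
    simp [Function.surjInv_eq]
  calc k = B.rank := hBr.symm
    _ = ((B.submatrix f g).submatrix (Function.surjInv hf) (Function.surjInv hg)).rank := by
        rw [← hBs]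
    _ ≤ (B.submatrix f g).rank := aux_rank_submatrix_le _ _ _

lemma aux_measure_nonsurj (k n ℓ : ℕ) (inst : Nonempty (Fin k))
    (e : Fin ℓ → Fin n) (he : Function.Injective e) :
    (Measure.pi fun _ : Fin n => (@PMF.uniformOfFintype (Fin k) _ inst).toMeasure)
      {z : Fin n → Fin k | ¬ Function.Surjective fun j => z (e j)}
      ≤ (k : ℝ≥0∞) * (1 - (k : ℝ≥0∞)⁻¹) ^ ℓ := by
  set μ0 : Measure (Fin k) := (@PMF.uniformOfFintype (Fin k) _ inst).toMeasure with hμ0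
  haveI : IsProbabilityMeasure μ0 := PMF.toMeasure.isProbabilityMeasure _
  have hμc : ∀ c : Fin k, μ0 ({c}ᶜ) = 1 - (k : ℝ≥0∞)⁻¹ := by
    intro c
    rw [measure_compl (measurableSet_singleton c) (measure_ne_top _ _), measure_univ,
      hμ0, PMF.toMeasure_apply_singleton _ _ (measurableSet_singleton c),
      PMF.uniformOfFintype_apply, Fintype.card_fin]
  have hsub : {z : Fin n → Fin k | ¬ Function.Surjective fun j => z (e j)} ⊆
      ⋃ c : Fin k, Set.pi Set.univ
        (fun i => if i ∈ Finset.image e Finset.univ then ({c}ᶜ : Set (Fin k)) else Set.univ) := by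
    intro z hz
    simp only [Set.mem_setOf_eq, Function.Surjective, not_forall] at hz
    obtain ⟨c, hc⟩ := hz
    push_neg at hc
    refine Set.mem_iUnion.2 ⟨c, fun i _ => ?_⟩
    simp only []
    split_ifs with h
    · obtain ⟨j, _, rfl⟩ := Finset.mem_image.1 h
      exact hc j
    · trivial
  calc (Measure.pi fun _ : Fin n => μ0)
        {z : Fin n → Fin k | ¬ Function.Surjective fun j => z (e j)}
      ≤ (Measure.pi fun _ : Fin n => μ0) (⋃ c : Fin k, Set.pi Set.univ
          (fun i => if i ∈ Finset.image e Finset.univ then ({c}ᶜ : Set (Fin k)) else Set.univ)) :=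
        measure_mono hsub
    _ ≤ ∑ c : Fin k, (Measure.pi fun _ : Fin n => μ0) (Set.pi Set.univ
          (fun i => if i ∈ Finset.image e Finset.univ then ({c}ᶜ : Set (Fin k)) else Set.univ)) :=
        measure_iUnion_fintype_le _ _
    _ = ∑ _c : Fin k, (1 - (k : ℝ≥0∞)⁻¹) ^ ℓ := by
        refine Finset.sum_congr rfl fun c _ => ?_
        rw [Measure.pi_pi]
        have : ∀ i : Fin n,
            μ0 (if i ∈ Finset.image e Finset.univ then ({c}ᶜ : Set (Fin k)) else Set.univ)
              = if i ∈ Finset.image e Finset.univ then (1 - (k : ℝ≥0∞)⁻¹) else 1 := by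
          intro i
          split_ifs
          · exact hμc c
          · exact measure_univ
        simp only [this]
        rw [Finset.prod_ite_mem, Finset.univ_inter, Finset.prod_const,
          Finset.card_image_of_injective _ he, Finset.card_univ, Fintype.card_fin]
    _ = (k : ℝ≥0∞) * (1 - (k : ℝ≥0∞)⁻¹) ^ ℓ := by
        rw [Finset.sum_const, Finset.card_univ, Fintype.card_fin, nsmul_eq_mul]

lemma aux_analytic (k ℓ : ℕ) (hk : 2 ≤ k) (hℓ : (ℓ : ℝ) ≥ 2 * (k : ℝ) * Real.log (k : ℝ)) :
    (k : ℝ) * (1 - 1 / (k : ℝ)) ^ ℓ ≤ 1 / (k : ℝ) := by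
  have hk0 : (0 : ℝ) < k := by positivity
  have hk1 : (1 : ℝ) ≤ k := by exact_mod_cast Nat.one_le_of_lt hk
  have h0 : (0 : ℝ) ≤ 1 - 1 / (k : ℝ) := by
    rw [sub_nonneg, div_le_one hk0]; exact hk1
  have h1 : (1 : ℝ) - 1 / (k : ℝ) ≤ Real.exp (-(1 / (k : ℝ))) := by
    have := Real.add_one_le_exp (-(1 / (k : ℝ))); linarith
  have h2 : (1 - 1 / (k : ℝ)) ^ ℓ ≤ Real.exp (-(1 / (k : ℝ))) ^ ℓ :=
    pow_le_pow_left₀ h0 h1 ℓ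
  rw [← Real.exp_nat_mul] at h2
  have h3 : (ℓ : ℝ) * -(1 / (k : ℝ)) ≤ -(2 * Real.log (k : ℝ)) := by
    rw [mul_neg, neg_le_neg_iff, mul_one_div, le_div_iff₀ hk0]
    linarith
  have h4 : Real.exp ((ℓ : ℝ) * -(1 / (k : ℝ))) ≤ ((k : ℝ) ^ 2)⁻¹ := by
    calc Real.exp ((ℓ : ℝ) * -(1 / (k : ℝ))) ≤ Real.exp (-(2 * Real.log (k : ℝ))) :=
          Real.exp_le_exp.2 h3
      _ = ((k : ℝ) ^ 2)⁻¹ := by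
          rw [Real.exp_neg, show (2 : ℝ) * Real.log (k : ℝ) = ((2:ℕ):ℝ) * Real.log (k:ℝ) by norm_num,
            Real.exp_nat_mul, Real.exp_log hk0]
  have h5 : (1 - 1 / (k : ℝ)) ^ ℓ ≤ ((k : ℝ) ^ 2)⁻¹ := le_trans h2 h4
  calc (k : ℝ) * (1 - 1 / (k : ℝ)) ^ ℓ ≤ (k : ℝ) * ((k : ℝ) ^ 2)⁻¹ :=
        mul_le_mul_of_nonneg_left h5 hk0.le
    _ = 1 / (k : ℝ) := by field_simp

lemma aux_prob_surj (k n ℓ : ℕ) (hk : 2 ≤ k)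
    (hℓ : (ℓ : ℝ) ≥ 2 * (k : ℝ) * Real.log (k : ℝ)) (inst : Nonempty (Fin k))
    (e : Fin ℓ → Fin n) (he : Function.Injective e) :
    1 - 1 / (k : ℝ) ≤
      ((Measure.pi fun _ : Fin n => (@PMF.uniformOfFintype (Fin k) _ inst).toMeasure)
        {z : Fin n → Fin k | Function.Surjective fun j => z (e j)}).toReal := by
  set μ := Measure.pi fun _ : Fin n => (@PMF.uniformOfFintype (Fin k) _ inst).toMeasure with hμ
  haveI : ∀ i : Fin n, IsProbabilityMeasure
      ((fun _ : Fin n => (@PMF.uniformOfFintype (Fin k) _ inst).toMeasure) i) :=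
    fun _ => PMF.toMeasure.isProbabilityMeasure _
  haveI : IsProbabilityMeasure μ := by rw [hμ]; infer_instance
  set A := {z : Fin n → Fin k | Function.Surjective fun j => z (e j)} with hA
  have hAm : MeasurableSet A := (Set.toFinite A).measurableSet
  have hco : Aᶜ = {z : Fin n → Fin k | ¬ Function.Surjective fun j => z (e j)} := by
    ext z; simp [hA]
  have h1 : μ Aᶜ ≤ (k : ℝ≥0∞) * (1 - (k : ℝ≥0∞)⁻¹) ^ ℓ := by
    rw [hco]; exact aux_measure_nonsurj k n ℓ inst e he
  have hne : ((k : ℝ≥0∞) * (1 - (k : ℝ≥0∞)⁻¹) ^ ℓ) ≠ ⊤ :=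
    ENNReal.mul_ne_top (ENNReal.natCast_ne_top k)
      (ENNReal.pow_ne_top (ne_top_of_le_ne_top ENNReal.one_ne_top tsub_le_self))
  have hinvle : (k : ℝ≥0∞)⁻¹ ≤ 1 := by
    simp [ENNReal.inv_le_one]
    exact_mod_cast Nat.one_le_of_lt hk
  have htr : ((k : ℝ≥0∞) * (1 - (k : ℝ≥0∞)⁻¹) ^ ℓ).toReal
      = (k : ℝ) * (1 - 1 / (k : ℝ)) ^ ℓ := by
    rw [ENNReal.toReal_mul, ENNReal.toReal_pow,
      ENNReal.toReal_sub_of_le hinvle ENNReal.one_ne_top, ENNReal.toReal_one,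
      ENNReal.toReal_inv, ENNReal.toReal_natCast, one_div]
  have h2 : (μ Aᶜ).toReal ≤ 1 / (k : ℝ) := by
    have t1 := ENNReal.toReal_mono hne h1
    rw [htr] at t1
    linarith [aux_analytic k ℓ hk hℓ]
  have h4 : (μ Aᶜ).toReal = 1 - (μ A).toReal := by
    rw [prob_compl_eq_one_sub hAm,
      ENNReal.toReal_sub_of_le prob_le_one ENNReal.one_ne_top, ENNReal.toReal_one]
  linarith

/-- Proposition 2: for a degree-corrected stochastic co-blockmodel with `k ≥ 2`
blocks, invertible mixing matrix `B`, strictly positive degree parameters, and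
i.i.d. uniform community memberships, the ℓ×ℓ top-right corner `M_ℓ` of the
conditional expectation matrix has full rank `k` with probability at least
`1 - 2/k`, provided `ℓ ≥ 2 k log k` and `n ≥ 2ℓ`. -/
theorem dcsbm_corner_full_rank_whp (k ℓ n : ℕ) (hk : 2 ≤ k)
    (hℓ : (ℓ : ℝ) ≥ 2 * (k : ℝ) * Real.log (k : ℝ)) (hn : 2 * ℓ ≤ n)
    (B : Matrix (Fin k) (Fin k) ℝ) (hB : IsUnit B)
    (θout θin : Fin n → ℝ)
    (hθout : ∀ i, 0 < θout i) (hθin : ∀ j, 0 < θin j) :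
    (((Measure.pi fun _ : Fin n =>
          (@PMF.uniformOfFintype (Fin k) _ ⟨⟨0, by omega⟩⟩).toMeasure).prod
        (Measure.pi fun _ : Fin n =>
          (@PMF.uniformOfFintype (Fin k) _ ⟨⟨0, by omega⟩⟩).toMeasure))
      {p : (Fin n → Fin k) × (Fin n → Fin k) |
        (Matrix.of fun i j : Fin ℓ =>
            θout ⟨i.val, by have := i.isLt; omega⟩ *
              B (p.1 ⟨i.val, by have := i.isLt; omega⟩)
                (p.2 ⟨n - ℓ + j.val, by have := j.isLt; omega⟩) *
              θin ⟨n - ℓ + j.val, by have := j.isLt; omega⟩).rank = k}).toReal ≥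
      1 - 2 / (k : ℝ) := by
  have inst : Nonempty (Fin k) := ⟨⟨0, by omega⟩⟩
  set μ := Measure.pi fun _ : Fin n => (@PMF.uniformOfFintype (Fin k) _ inst).toMeasure with hμ
  haveI : ∀ i : Fin n, IsProbabilityMeasure
      ((fun _ : Fin n => (@PMF.uniformOfFintype (Fin k) _ inst).toMeasure) i) :=
    fun _ => PMF.toMeasure.isProbabilityMeasure _
  haveI hPμ : IsProbabilityMeasure μ := by rw [hμ]; infer_instance
  haveI : IsProbabilityMeasure (μ.prod μ) := by infer_instance
  set e1 : Fin ℓ → Fin n := fun i => ⟨i.val, by have := i.isLt; omega⟩ with he1def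
  set e2 : Fin ℓ → Fin n := fun j => ⟨n - ℓ + j.val, by have := j.isLt; omega⟩ with he2def
  have he1 : Function.Injective e1 := by
    intro i i' h
    have : (e1 i).val = (e1 i').val := congrArg Fin.val h
    simp [he1def] at this
    exact Fin.ext this
  have he2 : Function.Injective e2 := by
    intro i i' h
    have : (e2 i).val = (e2 i').val := congrArg Fin.val h
    simp [he2def] at this
    exact Fin.ext (by omega)
  set A := {z : Fin n → Fin k | Function.Surjective fun j => z (e1 j)} with hA
  set C := {z : Fin n → Fin k | Function.Surjective fun j => z (e2 j)} with hC
  have hsub : A ×ˢ C ⊆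
      {p : (Fin n → Fin k) × (Fin n → Fin k) |
        (Matrix.of fun i j : Fin ℓ =>
            θout ⟨i.val, by have := i.isLt; omega⟩ *
              B (p.1 ⟨i.val, by have := i.isLt; omega⟩)
                (p.2 ⟨n - ℓ + j.val, by have := j.isLt; omega⟩) *
              θin ⟨n - ℓ + j.val, by have := j.isLt; omega⟩).rank = k} := by
    rintro ⟨z, y⟩ ⟨hz, hy⟩
    exact aux_rank_corner B hB (fun i => z (e1 i)) (fun j => y (e2 j)) hz hy
      (fun i => θout (e1 i)) (fun j => θin (e2 j))
      (fun i => (hθout (e1 i)).ne') (fun j => (hθin (e2 j)).ne')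
  have hprod : (μ.prod μ) (A ×ˢ C) = μ A * μ C := Measure.prod_prod A C
  have hmono := measure_mono (μ := μ.prod μ) hsub
  have h1 : (1 : ℝ) - 1 / (k : ℝ) ≤ (μ A).toReal := aux_prob_surj k n ℓ hk hℓ inst e1 he1
  have h2 : (1 : ℝ) - 1 / (k : ℝ) ≤ (μ C).toReal := aux_prob_surj k n ℓ hk hℓ inst e2 he2
  have ha1 : (μ A).toReal ≤ 1 := by
    rw [show (1:ℝ) = (1:ℝ≥0∞).toReal from ENNReal.toReal_one.symm]
    exact ENNReal.toReal_mono ENNReal.one_ne_top prob_le_one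
  have hc1 : (μ C).toReal ≤ 1 := by
    rw [show (1:ℝ) = (1:ℝ≥0∞).toReal from ENNReal.toReal_one.symm]
    exact ENNReal.toReal_mono ENNReal.one_ne_top prob_le_one
  have hk0 : (0 : ℝ) < k := by positivity
  have hk2 : (2 : ℝ) ≤ k := by exact_mod_cast hk
  have h0 : (0 : ℝ) ≤ 1 - 1 / (k : ℝ) := by
    rw [sub_nonneg, div_le_one hk0]; linarith
  have hfin : (μ.prod μ)
      {p : (Fin n → Fin k) × (Fin n → Fin k) |
        (Matrix.of fun i j : Fin ℓ =>
            θout ⟨i.val, by have := i.isLt; omega⟩ *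
              B (p.1 ⟨i.val, by have := i.isLt; omega⟩)
                (p.2 ⟨n - ℓ + j.val, by have := j.isLt; omega⟩) *
              θin ⟨n - ℓ + j.val, by have := j.isLt; omega⟩).rank = k} ≠ ⊤ :=
    measure_ne_top _ _
  have hT := ENNReal.toReal_mono hfin hmono
  rw [hprod, ENNReal.toReal_mul] at hT
  have hkey : (1 - 1 / (k : ℝ)) * (1 - 1 / (k : ℝ)) ≤ (μ A).toReal * (μ C).toReal :=
    mul_le_mul h1 h2 h0 (le_trans h0 h1)
  have hsq : 1 - 2 / (k : ℝ) ≤ (1 - 1 / (k : ℝ)) * (1 - 1 / (k : ℝ)) := by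
    have : (0:ℝ) ≤ (1 / (k:ℝ)) * (1 / (k:ℝ)) := by positivity
    ring_nf
    nlinarith
  linarith
end

section
/- Let n and k be positive integers, let U be an n×k real matrix, let R be a k×n real matrix (playing the role of D Vᵀ), and set Z = U R, an n×n matrix of rank at most k. Let x ∈ ℝ^n. Define the k×n matrix W by W_{rj} = R_{rj} · x_j, and define W̃ by W̃_{ri} = Σ_{j=i+1}^{n} W_{rj}. Then for every i ∈ {1,…,n}, the i-th entry of the matrix-vector product P_U(Z) x equals ⟨U_{i·}, W̃_{·i}⟩ = Σ_{r=1}^{k} U_{ir} · W̃_{ri}, i.e., [P_U(Z) x]_i = Σ_{r=1}^{k} U_{ir} · Σ_{j=i+1}^{n} R_{rj} · x_j. -/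
open Finset

/-- Proposition 3 (multiplication identity): for `Z = U R` of rank at most `k`
and `P_U(Z)` its strict upper-triangular projection,
`[P_U(Z) x]_i = Σ_{r=1}^k U_{ir} Σ_{j=i+1}^n R_{rj} x_j`. -/
theorem upper_proj_mulVec (n k : ℕ) (hn : 0 < n) (hk : 0 < k)
    (U : Matrix (Fin n) (Fin k) ℝ) (R : Matrix (Fin k) (Fin n) ℝ)
    (Z : Matrix (Fin n) (Fin n) ℝ) (hZ : Z = U * R)
    (PU : Matrix (Fin n) (Fin n) ℝ)
    (hPU : ∀ i j, PU i j = if i < j then Z i j else 0)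
    (x : Fin n → ℝ) :
    ∀ i : Fin n,
      PU.mulVec x i =
        ∑ r : Fin k, U i r * ∑ j ∈ univ.filter (fun j : Fin n => i < j), R r j * x j := by
  intro i
  simp only [Matrix.mulVec, dotProduct, hPU, hZ, Matrix.mul_apply, ite_mul, zero_mul]
  rw [Finset.sum_ite, Finset.sum_const_zero, add_zero]
  simp only [Finset.sum_mul, Finset.mul_sum]
  rw [Finset.sum_comm]
  exact Finset.sum_congr rfl fun r _ => Finset.sum_congr rfl fun j _ => by ring
end

section
/- Let n and k be positive integers, let U be an n×k real matrix, let R be a k×n real matrix, and set Z = U R, an n×n matrix of rank at most k. Let x ∈ ℝ^n. Then for every j ∈ {1,…,n}, the j-th entry of the vector-matrix product xᵀ P_U(Z) equals Σ_{r=1}^{k} R_{rj} · Σ_{i=1}^{j−1} U_{ir} · x_i. -/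
open Finset

/-- Left-multiplication analogue of Proposition 3: for `Z = U R` and `P_U(Z)`
its strict upper-triangular projection,
`[xᵀ P_U(Z)]_j = Σ_{r=1}^k R_{rj} Σ_{i=1}^{j-1} U_{ir} x_i`. -/
theorem upper_proj_vecMul (n k : ℕ) (hn : 0 < n) (hk : 0 < k)
    (U : Matrix (Fin n) (Fin k) ℝ) (R : Matrix (Fin k) (Fin n) ℝ)
    (Z : Matrix (Fin n) (Fin n) ℝ) (hZ : Z = U * R)
    (PU : Matrix (Fin n) (Fin n) ℝ)
    (hPU : ∀ i j, PU i j = if i < j then Z i j else 0)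
    (x : Fin n → ℝ) :
    ∀ j : Fin n,
      Matrix.vecMul x PU j =
        ∑ r : Fin k, R r j * ∑ i ∈ univ.filter (fun i : Fin n => i < j), U i r * x i := by
  intro j
  simp only [Matrix.vecMul, dotProduct, hPU, hZ, Matrix.mul_apply,
    mul_ite, mul_zero]
  rw [sum_ite, sum_const_zero, add_zero]; simp only [mul_sum]; rw [sum_comm]
  congr 1; ext r; congr 1; ext i; ring
end

section
/- Let n and k be positive integers, let U be an n×k real matrix, let R be a k×n real matrix (playing the role of D Vᵀ), and set Z = U R. For r, q ∈ {1,…,k}, define vectors U^{rq}, V^{rq△} ∈ ℝ^n by U^{rq}_i = U_{ir} · U_{iq} and V^{rq△}_i = Σ_{j=i+1}^{n} R_{rj} · R_{qj}. Then the squared Frobenius norm of the strict upper-triangular part of Z satisfies ‖P_U(Z)‖_F² = Σ_{i<j} Z_{ij}² = Σ_{r=1}^{k} Σ_{q=1}^{k} ⟨U^{rq}, V^{rq△}⟩ = Σ_{r=1}^{k} Σ_{q=1}^{k} Σ_{i=1}^{n} U_{ir} U_{iq} · Σ_{j=i+1}^{n} R_{rj} R_{qj}. -/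
open Finset

/-- Second identity of Proposition 4: for `Z = U R`, the squared Frobenius norm
of the strict upper-triangular part of `Z` is `Σ_{i<j} Z_{ij}²` and equals
`Σ_r Σ_q ⟨U^{rq}, V^{rq△}⟩ = Σ_r Σ_q Σ_i U_{ir} U_{iq} Σ_{j>i} R_{rj} R_{qj}`. -/
theorem upper_proj_sq_frobenius (n k : ℕ) (hn : 0 < n) (hk : 0 < k)
    (U : Matrix (Fin n) (Fin k) ℝ) (R : Matrix (Fin k) (Fin n) ℝ)
    (Z : Matrix (Fin n) (Fin n) ℝ) (hZ : Z = U * R)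
    (PU : Matrix (Fin n) (Fin n) ℝ)
    (hPU : ∀ i j, PU i j = if i < j then Z i j else 0) :
    (∑ i : Fin n, ∑ j : Fin n, (PU i j) ^ 2 =
        ∑ p ∈ univ.filter (fun p : Fin n × Fin n => p.1 < p.2), (Z p.1 p.2) ^ 2) ∧
      ∑ i : Fin n, ∑ j : Fin n, (PU i j) ^ 2 =
        ∑ r : Fin k, ∑ q : Fin k, ∑ i : Fin n,
          (U i r * U i q) * ∑ j ∈ univ.filter (fun j : Fin n => i < j), R r j * R q j := by
  have L : ∑ i : Fin n, ∑ j : Fin n, (PU i j) ^ 2 =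
      ∑ i : Fin n, ∑ j ∈ univ.filter (fun j : Fin n => i < j), (Z i j) ^ 2 := by
    simp [hPU, apply_ite (· ^ 2), Finset.sum_filter]
  constructor
  · rw [L]
    simp only [Finset.sum_filter]
    rw [Fintype.sum_prod_type]
  · rw [L]
    have : ∀ i : Fin n, ∀ j : Fin n, (Z i j) ^ 2 =
        ∑ r : Fin k, ∑ q : Fin k, (U i r * U i q) * (R r j * R q j) := by
      intro i j
      rw [hZ, Matrix.mul_apply, sq, Finset.sum_mul_sum]
      apply Finset.sum_congr rfl; intro r _
      apply Finset.sum_congr rfl; intro q _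
      ring
    simp only [this, Finset.mul_sum]
    have h1 : ∀ i : Fin n,
        ∑ j ∈ univ.filter (fun j : Fin n => i < j), ∑ r : Fin k, ∑ q : Fin k,
          U i r * U i q * (R r j * R q j)
        = ∑ r : Fin k, ∑ q : Fin k, ∑ j ∈ univ.filter (fun j : Fin n => i < j),
          U i r * U i q * (R r j * R q j) := by
      intro i
      rw [Finset.sum_comm]
      exact Finset.sum_congr rfl fun r _ => Finset.sum_comm
    simp only [h1]
    rw [Finset.sum_comm]
    exact Finset.sum_congr rfl fun r _ => Finset.sum_comm
end
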